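/- Let j ≥ 1 and ℓ ≥ 1, and let (δ, ε) ∈ S_{j,ℓ}. Then δ and ε have no nontrivial common suffix: there do not exist classes δ₀, ε₀ and a nonempty class ξ with δ = δ₀·ξ and ε = ε₀·ξ. -/

import Mathlib

/-! Combinatorial model of the Mitscher–Spielberg category of paths `Λ`. -/

/-- The letters (edges) of the category of paths: `A = α`, `B = β`, and the `Λ₂`-edges
`G j = γ^{(j)}`. -/
inductive Letter : Type
  | A : Letter
  | B : Letter
  | G : ℕ → Letter
  deriving DecidableEq

/-- A letter lies in `{α, β}` (i.e. is a `Λ₁`-edge). -/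
def Letter.isAB : Letter → Prop
  | .A => True
  | .B => True
  | .G _ => False

/-- `w` is a path from the vertex `v_m`: the `t`-th entry (1-indexed), if equal to `G j`,
must satisfy `1 ≤ j ≤ k (m + t − 1)`. -/
def IsPath (k : ℕ → ℕ) (m : ℕ) (w : List Letter) : Prop :=
  ∀ t : Fin w.length, ∀ j : ℕ, w.get t = Letter.G j → 1 ≤ j ∧ j ≤ k (m + (t : ℕ))

/-- One elementary move: transpose two adjacent entries which both lie in `{α, β}`. -/
def Swap (w₁ w₂ : List Letter) : Prop :=
  ∃ (u v : List Letter) (a b : Letter), a.isAB ∧ b.isAB ∧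
    w₁ = u ++ a :: b :: v ∧ w₂ = u ++ b :: a :: v

/-- The equivalence relation `≈` generated by the elementary moves; classes of paths from `v_m`
are the elements of `Λ(m)`. -/
def PEqv : List Letter → List Letter → Prop := Relation.EqvGen Swap

/-- The class of `μ` extends the class of `ν` (i.e. `μ = ν·ξ` for some class `ξ`). -/
def PExtends (μ ν : List Letter) : Prop := ∃ ξ : List Letter, PEqv μ (ν ++ ξ)

/-- The class of `μ` extends the class of `ν` nontrivially. -/
def PExtendsNontrivially (μ ν : List Letter) : Prop :=
  ∃ ξ : List Letter, ξ ≠ [] ∧ PEqv μ (ν ++ ξ)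

/-- `μ ⩓ ν`: the classes of `μ` and `ν` admit a common extension in `Λ(m)`. -/
def Meets (k : ℕ → ℕ) (m : ℕ) (μ ν : List Letter) : Prop :=
  ∃ l : List Letter, IsPath k m l ∧ PExtends l μ ∧ PExtends l ν

/-- The class of `w` belongs to `Φ_n^m ⊆ Λ(m)`: either `w` is empty, or `1 ≤ |w| ≤ n` and the
last letter of `w` is of the form `G j`. -/
def InPhi (n : ℕ) (w : List Letter) : Prop :=
  w = [] ∨ (1 ≤ w.length ∧ w.length ≤ n ∧ ∃ j : ℕ, w.getLast? = some (Letter.G j))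

/-- A `Λ₁`-word: all letters lie in `{α, β}`. -/
def IsLambda1 (w : List Letter) : Prop := ∀ a ∈ w, a.isAB

/-- The degrees `d(η) = (#α's, #β's)` and `d(θ)` are orthogonal in `ℕ²`. -/
def DegPerp (η θ : List Letter) : Prop :=
  η.count Letter.A * θ.count Letter.A + η.count Letter.B * θ.count Letter.B = 0

/-- `p : ℕ → ℕ` enumerates `{i ≥ 1 : k i ≠ 0}` in increasing order, with `p 0 = 0`. -/
def Enumerates (k p : ℕ → ℕ) : Prop :=
  p 0 = 0 ∧ StrictMono p ∧ (∀ j, 1 ≤ j → 1 ≤ p j ∧ k (p j) ≠ 0) ∧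
    ∀ i, 1 ≤ i → k i ≠ 0 → ∃ j, p j = i

/-- `(μ, ν) ∈ S_j`: both classes lie in `Φ_{p_j} = Φ_{p_j}^1 ⊆ Λ(1)` and at least one of them
has length `p_j`. -/
def InS (k p : ℕ → ℕ) (j : ℕ) (μ ν : List Letter) : Prop :=
  IsPath k 1 μ ∧ IsPath k 1 ν ∧ InPhi (p j) μ ∧ InPhi (p j) ν ∧
    (μ.length = p j ∨ ν.length = p j)

/-- `(δ, ε) ∈ S_{j,ℓ}`: `δ = μ·η` and `ε = ν·θ` with `(μ, ν) ∈ S_j`, `η, θ` `Λ₁`-words,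
`|δ| = |ε| = p_j + ℓ`, and `d(η) ⊥ d(θ)`. -/
def InSJL (k p : ℕ → ℕ) (j ℓ : ℕ) (δ ε : List Letter) : Prop :=
  ∃ μ ν η θ : List Letter, InS k p j μ ν ∧ IsLambda1 η ∧ IsLambda1 θ ∧
    PEqv δ (μ ++ η) ∧ PEqv ε (ν ++ θ) ∧
    δ.length = p j + ℓ ∧ ε.length = p j + ℓ ∧ DegPerp η θ

/-!
The maximal `{α, β}`-suffix of a word is, up to permutation, an invariant of `≈`: a transposition
either happens inside that suffix or strictly before its first letter. For `μ ∈ Φ_n` and a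
`Λ₁`-word `η` the maximal `{α, β}`-suffix of `μ·η` is `η` itself, because `μ` is empty or ends
in a `γ`-edge. Now let `ξ` be a common nonempty suffix of `δ = μ·η` and `ε = ν·θ`, with last letter
`x`. Since `|μ| ≤ p_j < |δ|`, `η` is nonempty, so `x` cannot be a `γ`-edge; hence `x ∈ {α, β}`
occurs both in `η` and in `θ`, contradicting `d(η) ⊥ d(θ)`.
-/

namespace List

variable {α : Type*} {p : α → Bool}

theorem rtakeWhile_append_of_forall (l₁ : List α) {l₂ : List α} (h : ∀ x ∈ l₂, p x) :
    (l₁ ++ l₂).rtakeWhile p = l₁.rtakeWhile p ++ l₂ := by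
  induction l₂ using List.reverseRecOn with
  | nil => simp
  | append_singleton l₂ x ih =>
    rw [← append_assoc, rtakeWhile_concat_pos _ _ _ (h x (by simp)),
      ih fun y hy => h y (by simp [hy]), append_assoc]

theorem rtakeWhile_append_of_not_forall (l₁ : List α) {l₂ : List α} (h : ¬ ∀ x ∈ l₂, p x) :
    (l₁ ++ l₂).rtakeWhile p = l₂.rtakeWhile p := by
  induction l₂ using List.reverseRecOn with
  | nil => simp at h
  | append_singleton l₂ x ih =>
    rw [← append_assoc]
    by_cases hx : p x
    · rw [rtakeWhile_concat_pos _ _ _ hx, rtakeWhile_concat_pos _ _ _ hx,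
        ih (by simpa [or_imp, forall_and, hx] using h)]
    · rw [rtakeWhile_concat_neg _ _ _ hx, rtakeWhile_concat_neg _ _ _ hx]

theorem rtakeWhile_perm_of_perm_infix {u v l l' : List α} (hl : l ~ l') (h : ∀ x ∈ l, p x) :
    (u ++ l ++ v).rtakeWhile p ~ (u ++ l' ++ v).rtakeWhile p := by
  by_cases hv : ∀ x ∈ v, p x
  · rw [rtakeWhile_append_of_forall _ hv, rtakeWhile_append_of_forall _ hv,
      rtakeWhile_append_of_forall _ h,
      rtakeWhile_append_of_forall _ fun x hx => h x (hl.mem_iff.2 hx)]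
    exact (hl.append_left _).append_right _
  · rw [rtakeWhile_append_of_not_forall _ hv, rtakeWhile_append_of_not_forall _ hv]

end List

instance : DecidablePred Letter.isAB
  | .A => isTrue trivial
  | .B => isTrue trivial
  | .G _ => isFalse id

def abSuffix (w : List Letter) : List Letter := w.rtakeWhile fun a => a.isAB

theorem PEqv.perm_of_swap_perm {f : List Letter → List Letter}
    (hf : ∀ {w₁ w₂}, Swap w₁ w₂ → (f w₁).Perm (f w₂)) {w₁ w₂ : List Letter} (h : PEqv w₁ w₂) :
    (f w₁).Perm (f w₂) :=
  (InvImage.equivalence _ f (List.Perm.eqv _)).eqvGen_iff.1 (h.mono fun _ _ => hf)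

theorem Swap.perm {w₁ w₂ : List Letter} (h : Swap w₁ w₂) : w₁.Perm w₂ := by
  obtain ⟨u, v, a, b, -, -, rfl, rfl⟩ := h
  exact (List.Perm.swap b a v).append_left u

theorem Swap.perm_abSuffix {w₁ w₂ : List Letter} (h : Swap w₁ w₂) :
    (abSuffix w₁).Perm (abSuffix w₂) := by
  obtain ⟨u, v, a, b, ha, hb, rfl, rfl⟩ := h
  simpa [abSuffix] using
    List.rtakeWhile_perm_of_perm_infix (u := u) (v := v) (List.Perm.swap b a []) (by simp [ha, hb])

theorem PEqv.length_eq {w₁ w₂ : List Letter} (h : PEqv w₁ w₂) : w₁.length = w₂.length :=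
  (h.perm_of_swap_perm (f := id) Swap.perm).length_eq

theorem PEqv.perm_abSuffix {w₁ w₂ : List Letter} (h : PEqv w₁ w₂) :
    (abSuffix w₁).Perm (abSuffix w₂) :=
  h.perm_of_swap_perm Swap.perm_abSuffix

theorem InPhi.length_le {n : ℕ} {w : List Letter} (h : InPhi n w) : w.length ≤ n := by
  rcases h with rfl | ⟨-, h, -⟩
  exacts [Nat.zero_le n, h]

theorem abSuffix_append_of_inPhi {n : ℕ} {μ η : List Letter} (hμ : InPhi n μ)
    (hη : IsLambda1 η) : abSuffix (μ ++ η) = η := by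
  rw [abSuffix, List.rtakeWhile_append_of_forall _ (by simpa [IsLambda1] using hη)]
  rcases hμ with rfl | ⟨-, -, i, hi⟩
  · simp
  · obtain ⟨μ', rfl⟩ := List.getLast?_eq_some_iff.1 hi
    simp [Letter.isAB]

theorem PEqv.abSuffix_perm {n : ℕ} {δ μ η : List Letter} (h : PEqv δ (μ ++ η))
    (hμ : InPhi n μ) (hη : IsLambda1 η) : (abSuffix δ).Perm η := by
  simpa [abSuffix_append_of_inPhi hμ hη] using h.perm_abSuffix

theorem PEqv.mem_of_concat {n : ℕ} {w μ η : List Letter} {x : Letter}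
    (h : PEqv (w ++ [x]) (μ ++ η)) (hμ : InPhi n μ) (hη : IsLambda1 η) (hx : x.isAB) : x ∈ η :=
  (h.abSuffix_perm hμ hη).subset (by simp [abSuffix, List.rtakeWhile_concat_pos, hx])

theorem PEqv.isAB_of_concat {n : ℕ} {w μ η : List Letter} {x : Letter}
    (h : PEqv (w ++ [x]) (μ ++ η)) (hμ : InPhi n μ) (hη : IsLambda1 η) (hη_ne : η ≠ []) :
    x.isAB := by
  by_contra hx
  simpa [abSuffix, hx, eq_comm, hη_ne] using h.abSuffix_perm hμ hη

theorem DegPerp.not_mem_right {η θ : List Letter} (h : DegPerp η θ) {a : Letter} (ha : a.isAB)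
    (hη : a ∈ η) : a ∉ θ := by
  intro hθ
  have hpos := Nat.mul_pos (List.count_pos_iff.2 hη) (List.count_pos_iff.2 hθ)
  unfold DegPerp at h
  rcases a with _ | _ | _
  exacts [by omega, by omega, ha.elim]

theorem stmt5_general (k : ℕ → ℕ)
    (p : ℕ → ℕ)
    (j ℓ : ℕ) (hℓ : 1 ≤ ℓ)
    (δ ε : List Letter) (hSJL : InSJL k p j ℓ δ ε) :
    ¬ ∃ δ₀ ε₀ ξ : List Letter, ξ ≠ [] ∧ PEqv δ (δ₀ ++ ξ) ∧ PEqv ε (ε₀ ++ ξ) := by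
  obtain ⟨μ, ν, η, θ, ⟨-, -, hμ, hν, -⟩, hη, hθ, hδ, hε, hδ_len, -, hperp⟩ := hSJL
  rintro ⟨δ₀, ε₀, ξ, hξ, hδξ, hεξ⟩
  obtain ⟨ξ', x, rfl⟩ := (List.eq_nil_or_concat' ξ).resolve_left hξ
  rw [← List.append_assoc] at hδξ hεξ
  have hδx : PEqv (δ₀ ++ ξ' ++ [x]) (μ ++ η) := hδξ.symm.trans _ _ _ hδ
  have hεx : PEqv (ε₀ ++ ξ' ++ [x]) (ν ++ θ) := hεξ.symm.trans _ _ _ hε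
  have hη_ne : η ≠ [] := by
    rintro rfl
    have := hδ.length_eq
    have := hμ.length_le
    simp only [List.append_nil] at *
    omega
  have hx : x.isAB := hδx.isAB_of_concat hμ hη hη_ne
  exact hperp.not_mem_right hx (hδx.mem_of_concat hμ hη hx) (hεx.mem_of_concat hν hθ hx)

/-- Remark 3.6(3) of the paper.  Let `j ≥ 1`, `ℓ ≥ 1` and `(δ, ε) ∈ S_{j,ℓ}`.
Then `δ` and `ε` have no nontrivial common suffix: there are no classes `δ₀, ε₀` and nonempty
class `ξ` with `δ = δ₀·ξ` and `ε = ε₀·ξ`. -/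
theorem stmt5 (k : ℕ → ℕ) (hk0 : k 0 = 0)
    (hinf : {i : ℕ | 1 ≤ i ∧ k i ≠ 0}.Infinite)
    (p : ℕ → ℕ) (hp : Enumerates k p)
    (j ℓ : ℕ) (hj : 1 ≤ j) (hℓ : 1 ≤ ℓ)
    (δ ε : List Letter) (hSJL : InSJL k p j ℓ δ ε) :
    ¬ ∃ δ₀ ε₀ ξ : List Letter, ξ ≠ [] ∧ PEqv δ (δ₀ ++ ξ) ∧ PEqv ε (ε₀ ++ ξ) :=
  stmt5_general k p j ℓ hℓ δ ε hSJL
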